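/- arXiv:1305.4913 — 4 statements merged into one kernel-verified Lean document; each statement's English description precedes it below -/
import Mathlib

section
/- The image of the supercharacter σ_X : (Z/nZ)^d → ℂ is invariant under rotation by angle 2π·gcd(n,[X])/n about the origin; consequently it has n/gcd(n,[X])-fold dihedral symmetry. -/
open Finset

/-- `e n z` = exp(2πi·z/n) for `z : ZMod n`. -/
noncomputable def e (n : ℕ) (z : ZMod n) : ℂ :=
  Complex.exp (2 * Real.pi * Complex.I * z.val / n)

/-- Dot product on `(ZMod n)^d`. -/
def dot {n d : ℕ} (x y : Fin d → ZMod n) : ZMod n := ∑ i, x i * y i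

/-- The orbit `S_d · x` of `x` under coordinate permutation, as a `Finset`. -/
noncomputable def orbit (n d : ℕ) (x : Fin d → ZMod n) : Finset (Fin d → ZMod n) :=
  Finset.image (fun π : Equiv.Perm (Fin d) => x ∘ π) Finset.univ

/-- The symmetric supercharacter attached to the orbit of `x`. -/
noncomputable def σ (n d : ℕ) (x y : Fin d → ZMod n) : ℂ :=
  ∑ v ∈ orbit n d x, e n (dot v y)

noncomputable def E (n : ℕ) (k : ℤ) : ℂ :=
  Complex.exp (2 * Real.pi * Complex.I * k / n)

lemma E_congr {n : ℕ} (hn : 0 < n) {k m : ℤ} (h : (k : ZMod n) = (m : ZMod n)) :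
    E n k = E n m := by
  rw [ZMod.intCast_eq_intCast_iff] at h
  obtain ⟨t, ht⟩ := (Int.ModEq.dvd h)
  have hn' : (n : ℂ) ≠ 0 := by exact_mod_cast hn.ne'
  have hk : (k : ℂ) = m - n * t := by
    have : (k : ℤ) = m - n * t := by linarith
    exact_mod_cast congrArg (fun z : ℤ => (z : ℂ)) this
  unfold E
  rw [hk]
  have harg : 2 * Real.pi * Complex.I * ((m : ℂ) - n * t) / n =
      2 * Real.pi * Complex.I * m / n + (-t) * (2 * Real.pi * Complex.I) := by
    field_simp
    ring
  rw [harg, Complex.exp_add]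
  have h1 : Complex.exp (-(t : ℂ) * (2 * Real.pi * Complex.I)) = 1 := by
    have := Complex.exp_int_mul_two_pi_mul_I (-t)
    push_cast at this
    exact this
  rw [h1, mul_one]

lemma E_add {n : ℕ} (hn : 0 < n) (k m : ℤ) : E n (k + m) = E n k * E n m := by
  have hn' : (n : ℂ) ≠ 0 := by exact_mod_cast hn.ne'
  unfold E
  rw [← Complex.exp_add]
  congr 1
  push_cast
  field_simp

lemma e_eq {n : ℕ} (z : ZMod n) : e n z = E n z.val := by
  unfold e E; norm_num

lemma e_add {n : ℕ} (hn : 0 < n) (a b : ZMod n) : e n (a + b) = e n a * e n b := by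
  haveI : NeZero n := ⟨hn.ne'⟩
  rw [e_eq, e_eq, e_eq, ← E_add hn]
  apply E_congr hn
  push_cast
  simp [ZMod.natCast_val, ZMod.cast_id]

lemma e_conj {n : ℕ} (hn : 0 < n) (z : ZMod n) :
    (starRingEnd ℂ) (e n z) = e n (-z) := by
  haveI : NeZero n := ⟨hn.ne'⟩
  have h1 : (starRingEnd ℂ) (e n z) = E n (-(z.val : ℤ)) := by
    unfold e E
    rw [← Complex.exp_conj]
    congr 1
    push_cast
    simp only [map_div₀, map_mul, map_ofNat, Complex.conj_I, Complex.conj_ofReal,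
      Complex.conj_natCast, map_natCast]
    ring
  rw [h1, e_eq]
  apply E_congr hn
  push_cast
  simp [ZMod.natCast_val, ZMod.cast_id]

lemma sum_comp_orbit {n d : ℕ} (x : Fin d → ZMod n) {v : Fin d → ZMod n}
    (hv : v ∈ orbit n d x) : ∑ i, v i = ∑ i, x i := by
  obtain ⟨π, -, rfl⟩ := Finset.mem_image.mp hv
  exact Equiv.sum_comp π x

lemma sigma_shift {n d : ℕ} (hn : 0 < n) (x y : Fin d → ZMod n) (c : ZMod n) :
    σ n d x (y + fun _ => c) = e n ((∑ i, x i) * c) * σ n d x y := by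
  unfold σ
  rw [Finset.mul_sum]
  apply Finset.sum_congr rfl
  intro v hv
  have hdot : dot v (y + fun _ => c) = dot v y + (∑ i, x i) * c := by
    unfold dot
    have : ∑ i, v i * (y i + c) = (∑ i, v i * y i) + (∑ i, v i) * c := by
      rw [Finset.sum_mul]
      rw [← Finset.sum_add_distrib]
      apply Finset.sum_congr rfl
      intro i _
      ring
    simpa [sum_comp_orbit x hv] using this
  rw [hdot, e_add hn, mul_comm]

lemma sigma_neg {n d : ℕ} (hn : 0 < n) (x y : Fin d → ZMod n) :
    σ n d x (-y) = (starRingEnd ℂ) (σ n d x y) := by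
  unfold σ
  rw [map_sum]
  apply Finset.sum_congr rfl
  intro v hv
  have hdot : dot v (-y) = -(dot v y) := by
    unfold dot
    simp
  rw [hdot, ← e_conj hn]

theorem stmt_6 (n d : ℕ) (hn : 0 < n) (hd : 0 < d) (x : Fin d → ZMod n) :
    (∀ y : Fin d → ZMod n, ∃ y' : Fin d → ZMod n,
        σ n d x y' =
          Complex.exp (2 * Real.pi * Complex.I * (Nat.gcd n (∑ i, x i).val) / n) *
            σ n d x y) ∧
      (∀ y : Fin d → ZMod n, ∃ y' : Fin d → ZMod n,
        σ n d x y' = (starRingEnd ℂ) (σ n d x y)) := by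
  haveI : NeZero n := ⟨hn.ne'⟩
  constructor
  · intro y
    set S : ZMod n := ∑ i, x i with hS
    set s : ℕ := S.val with hs
    refine ⟨y + fun _ => ((Nat.gcdB n s : ZMod n)), ?_⟩
    rw [sigma_shift hn]
    congr 1
    have key : e n (S * (Nat.gcdB n s : ZMod n)) = E n (Nat.gcd n s : ℤ) := by
      rw [e_eq]
      apply E_congr hn
      have hgcd : (Nat.gcd n s : ℤ) = n * Nat.gcdA n s + s * Nat.gcdB n s :=
        Nat.gcd_eq_gcd_ab n s
      push_cast [hgcd]
      simp [hs, ZMod.natCast_val, ZMod.cast_id, ZMod.natCast_self]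
    rw [key]
    unfold E
    push_cast
    rfl
  · intro y
    exact ⟨-y, sigma_neg hn x y⟩
end

section
/- For any positive integers n, d and any residues a, b modulo n, the congruence aj + bk + djk ≡ gcd(n,d) (mod n) is solvable for integers j, k. Moreover, gcd(n,d) is the smallest positive value m for which aj + bk + djk ≡ m (mod n) is solvable for all choices of a and b. -/
/-!
By the Chinese remainder theorem `ZMod n` is a product of rings `ZMod (p ^ e)`, and solvability
of `a j + b k + d j k = t` for all `a, b` passes to products and to quotients. Each `ZMod (p ^ e)`
is a quotient of `ℤ_[p]`, hence a local ring in which divisibility is total. There, if neither `a`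
nor `b` divides `t`, both are multiples of `t`, so `b + d` is `d` times a unit, and `j = 1` reduces
the equation to `(b + d) k = t - a`, which is solvable as soon as `d ∣ t`. In `ZMod n`, `d` divides
`gcd n d`. Conversely, `a = b = 0` forces `d ∣ m` in `ZMod n`, that is `gcd n d ∣ m`.
-/

open Function

def BilinearSolvable {R : Type*} [CommRing R] (d t : R) : Prop :=
  ∀ a b : R, ∃ j k : R, a * j + b * k + d * j * k = t

namespace BilinearSolvable

variable {R S : Type*} [CommRing R] [CommRing S]

theorem prod {d t : R} {d' t' : S} (h : BilinearSolvable d t) (h' : BilinearSolvable d' t') :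
    BilinearSolvable (d, d') (t, t') := by
  rintro ⟨a, a'⟩ ⟨b, b'⟩
  obtain ⟨j, k, hjk⟩ := h a b
  obtain ⟨j', k', hjk'⟩ := h' a' b'
  exact ⟨(j, j'), (k, k'), Prod.ext hjk hjk'⟩

theorem map {d t : R} (h : BilinearSolvable d t) (f : R →+* S) (hf : Surjective f) :
    BilinearSolvable (f d) (f t) := by
  intro a b
  obtain ⟨a, rfl⟩ := hf a
  obtain ⟨b, rfl⟩ := hf b
  obtain ⟨j, k, hjk⟩ := h a b
  exact ⟨f j, f k, by simp only [← map_mul, ← map_add, hjk]⟩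

theorem of_dvd [IsLocalRing R] [PreValuationRing R] {d t : R} (hdt : d ∣ t) :
    BilinearSolvable d t := by
  intro a b
  by_cases ha : a ∣ t
  · obtain ⟨j, rfl⟩ := ha
    exact ⟨j, 0, by ring⟩
  by_cases hb : b ∣ t
  · obtain ⟨k, rfl⟩ := hb
    exact ⟨0, k, by ring⟩
  obtain ⟨a', rfl⟩ := (ValuationRing.dvd_total a t).resolve_left ha
  obtain ⟨w, rfl⟩ := (ValuationRing.dvd_total b t).resolve_left hb
  have hw : ¬IsUnit w := fun hw => hb (hw.mul_right_dvd.mpr dvd_rfl)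
  obtain ⟨s, rfl⟩ := hdt
  obtain ⟨u, hu⟩ : IsUnit (1 + s * w) := by
    simpa using IsLocalRing.isUnit_one_sub_self_of_mem_nonunits (-(s * w))
      (by simpa using fun h => hw (isUnit_of_mul_isUnit_right h))
  refine ⟨1, ↑u⁻¹ * s * (1 - a'), ?_⟩
  linear_combination (d * s * (1 - a')) * u.mul_inv - (d * s * (1 - a') * ↑u⁻¹) * hu

end BilinearSolvable

namespace ZMod

theorem natCast_dvd_natCast_iff_gcd_dvd {x y n : ℕ} :
    (x : ZMod n) ∣ (y : ZMod n) ↔ Nat.gcd x n ∣ y := by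
  constructor
  · rintro ⟨c, hc⟩
    replace hc : ((y : ℤ) : ZMod n) = ((x * c.cast : ℤ) : ZMod n) := by
      push_cast [intCast_zmod_cast]
      exact hc
    rw [intCast_eq_intCast_iff_dvd_sub] at hc
    have hx : (Nat.gcd x n : ℤ) ∣ x * (c.cast : ℤ) :=
      (Int.natCast_dvd_natCast.mpr (Nat.gcd_dvd_left x n)).mul_right _
    have hxy : (Nat.gcd x n : ℤ) ∣ x * (c.cast : ℤ) - y :=
      (Int.natCast_dvd_natCast.mpr (Nat.gcd_dvd_right x n)).trans hc
    exact_mod_cast (dvd_sub_right hx).mp hxy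
  · intro h
    refine dvd_trans ⟨Nat.gcdA x n, ?_⟩ (Nat.cast_dvd_cast h)
    have := congrArg (Int.cast : ℤ → ZMod n) (Nat.gcd_eq_gcd_ab x n)
    push_cast [natCast_self] at this
    simpa using this

theorem preValuationRing_primePow (p e : ℕ) [Fact p.Prime] : PreValuationRing (ZMod (p ^ e)) :=
  (ringHom_surjective (PadicInt.toZModPow e)).preValuationRing
    (PadicInt.toZModPow (p := p) e).toMonoidHom.toMulHom

theorem isLocalRing_primePow (p : ℕ) {e : ℕ} [Fact p.Prime] (he : e ≠ 0) :
    IsLocalRing (ZMod (p ^ e)) :=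
  have : Nontrivial (ZMod (p ^ e)) :=
    nontrivial_iff.mpr (Nat.one_lt_pow he (Fact.out : p.Prime).one_lt).ne'
  IsLocalRing.of_surjective' _ (ringHom_surjective (PadicInt.toZModPow (p := p) e))

theorem bilinearSolvable_of_dvd {n : ℕ} (hn : n ≠ 0) {d t : ZMod n} (h : d ∣ t) :
    BilinearSolvable d t := by
  induction n using Nat.recOnPosPrimePosCoprime with
  | prime_pow p e hp he =>
    have := Fact.mk hp
    have := preValuationRing_primePow p e
    have := isLocalRing_primePow p he.ne'
    exact BilinearSolvable.of_dvd h
  | zero => exact absurd rfl hn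
  | one => exact fun _ _ => ⟨0, 0, Subsingleton.elim _ _⟩
  | coprime m₁ m₂ h₁ h₂ hco ih₁ ih₂ =>
    let e := chineseRemainder hco
    have hprod := (ih₁ (by omega) (map_dvd (RingHom.fst _ _) (map_dvd e h))).prod
      (ih₂ (by omega) (map_dvd (RingHom.snd _ _) (map_dvd e h)))
    simpa using hprod.map e.symm.toRingHom e.symm.surjective

end ZMod

theorem stmt_8_general (n d : ℕ) (hn : 0 < n) :
    (∀ a b : ZMod n, ∃ j k : ZMod n,
        a * j + b * k + (d : ZMod n) * j * k = (Nat.gcd n d : ZMod n)) ∧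
      (∀ m : ℕ, 0 < m →
        (∀ a b : ZMod n, ∃ j k : ZMod n,
          a * j + b * k + (d : ZMod n) * j * k = (m : ZMod n)) →
        Nat.gcd n d ≤ m) := by
  have hdvd (m : ℕ) : (d : ZMod n) ∣ m ↔ n.gcd d ∣ m := by
    rw [ZMod.natCast_dvd_natCast_iff_gcd_dvd, Nat.gcd_comm]
  refine ⟨ZMod.bilinearSolvable_of_dvd hn.ne' ((hdvd _).mpr dvd_rfl), fun m hm hsolv => ?_⟩
  obtain ⟨j, k, hjk⟩ := hsolv 0 0
  refine Nat.le_of_dvd hm ((hdvd m).mp ⟨j * k, ?_⟩)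
  rw [← hjk]
  ring

theorem stmt_8 (n d : ℕ) (hn : 0 < n) (hd : 0 < d) :
    (∀ a b : ZMod n, ∃ j k : ZMod n,
        a * j + b * k + (d : ZMod n) * j * k = (Nat.gcd n d : ZMod n)) ∧
      (∀ m : ℕ, 0 < m →
        (∀ a b : ZMod n, ∃ j k : ZMod n,
          a * j + b * k + (d : ZMod n) * j * k = (m : ZMod n)) →
        Nat.gcd n d ≤ m) :=
  stmt_8_general n d hn
end

section
/- Let p be prime, ℓ ≥ 1, and a, b, d integers with d ≡ 0 (mod p) but p^ℓ ∤ d, i.e., d = p^δ d' with 1 ≤ δ < ℓ and gcd(d', p) = 1, and suppose p | a and p | b. Then the congruence aj + bk + djk ≡ gcd(p^ℓ, d) (mod p^ℓ) is solvable for integers j, k. -/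
/-- Extract the p-adic valuation of a nonzero integer. -/
lemma aux_val (p : ℤ) (hp : Prime p) : ∀ n : ℕ, ∀ a : ℤ, a ≠ 0 → a.natAbs ≤ n →
    ∃ m : ℕ, ∃ u : ℤ, ¬ p ∣ u ∧ a = p ^ m * u := by
  intro n
  induction n with
  | zero => intro a ha h; exact absurd (Int.natAbs_eq_zero.mp (by omega)) ha
  | succ n ih =>
    intro a ha h
    by_cases hpa : p ∣ a
    · obtain ⟨c, rfl⟩ := hpa
      have hc : c ≠ 0 := by rintro rfl; simp at ha
      have hp2 : 2 ≤ p.natAbs := (Int.prime_iff_natAbs_prime.mp hp).two_le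
      have : c.natAbs ≤ n := by
        have h1 : (p * c).natAbs = p.natAbs * c.natAbs := Int.natAbs_mul p c
        have h2 : 1 ≤ c.natAbs := Int.natAbs_pos.mpr hc
        nlinarith
      obtain ⟨m, u, hu, hcu⟩ := ih c hc this
      exact ⟨m + 1, u, hu, by rw [hcu]; ring⟩
    · exact ⟨0, a, hpa, by ring⟩

/-- Key solvability lemma: if x = p^m * x' with p ∤ x' and m ≤ ℓ, then
    j * x ≡ p^m * y (mod p^ℓ) is solvable. -/
lemma aux_key (p : ℤ) (hp : Prime p) (ℓ m : ℕ) (hm : m ≤ ℓ) (x' y : ℤ)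
    (hx' : ¬ p ∣ x') :
    ∃ j : ℤ, j * (p ^ m * x') ≡ p ^ m * y [ZMOD p ^ ℓ] := by
  have hcop : IsCoprime x' (p ^ (ℓ - m)) :=
    (((hp.coprime_iff_not_dvd).mpr hx').symm.pow_right (n := ℓ - m))
  obtain ⟨u, v, huv⟩ := hcop
  refine ⟨u * y, ?_⟩
  rw [Int.modEq_iff_dvd]
  have hℓ : p ^ ℓ = p ^ m * p ^ (ℓ - m) := by
    rw [← pow_add]; congr 1; omega
  refine ⟨y * v, ?_⟩
  rw [hℓ]
  have : u * x' = 1 - v * p ^ (ℓ - m) := by linarith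
  calc p ^ m * y - u * y * (p ^ m * x')
      = p ^ m * y - p ^ m * y * (u * x') := by ring
    _ = p ^ m * p ^ (ℓ - m) * (y * v) := by rw [this]; ring

theorem stmt_9 (p : ℕ) (hp : p.Prime) (ℓ : ℕ) (hℓ : 1 ≤ ℓ) (a b d : ℤ)
    (ha : (p : ℤ) ∣ a) (hb : (p : ℤ) ∣ b)
    (hd : ∃ (δ : ℕ) (d' : ℤ), 1 ≤ δ ∧ δ < ℓ ∧ ¬ (p : ℤ) ∣ d' ∧ d = (p : ℤ) ^ δ * d') :
    ∃ j k : ℤ,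
      a * j + b * k + d * j * k ≡ (Int.gcd ((p : ℤ) ^ ℓ) d : ℤ) [ZMOD ((p : ℤ) ^ ℓ)] := by
  obtain ⟨δ, d', hδ1, hδℓ, hpd', rfl⟩ := hd
  have hpp : Prime (p : ℤ) := Int.prime_iff_natAbs_prime.mpr (by simpa using hp)
  -- the gcd is p ^ δ
  have hgcd : (Int.gcd ((p : ℤ) ^ ℓ) ((p : ℤ) ^ δ * d') : ℤ) = (p : ℤ) ^ δ := by
    have h1 : ((p : ℤ) ^ ℓ) = (p : ℤ) ^ δ * (p : ℤ) ^ (ℓ - δ) := by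
      rw [← pow_add]; congr 1; omega
    rw [h1, Int.gcd_mul_left]
    have hcop : IsCoprime ((p : ℤ) ^ (ℓ - δ)) d' :=
      ((hpp.coprime_iff_not_dvd).mpr hpd').pow_left
    rw [Int.isCoprime_iff_gcd_eq_one.mp hcop]
    push_cast
    simp [abs_of_nonneg (pow_nonneg (Int.natCast_nonneg p) δ)]
  rw [hgcd]
  by_cases hA : (p : ℤ) ^ δ ∣ a
  · by_cases hB : (p : ℤ) ^ δ ∣ b
    · -- both divisible: choose k with d' * k ≡ 1 - a₀ (mod p)
      obtain ⟨a₀, rfl⟩ := hA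
      obtain ⟨b₀, rfl⟩ := hB
      obtain ⟨u, v, huv⟩ := (hpp.coprime_iff_not_dvd).mpr hpd'
      set k : ℤ := v * (1 - a₀) with hk
      have hx : (p : ℤ) ^ δ * a₀ + ((p : ℤ) ^ δ * d') * k
          = (p : ℤ) ^ δ * (1 - (p : ℤ) * (u * (1 - a₀))) := by
        have : d' * v = 1 - u * (p : ℤ) := by linarith
        calc (p : ℤ) ^ δ * a₀ + ((p : ℤ) ^ δ * d') * k
            = (p : ℤ) ^ δ * (a₀ + (d' * v) * (1 - a₀)) := by rw [hk]; ring
          _ = (p : ℤ) ^ δ * (1 - (p : ℤ) * (u * (1 - a₀))) := by rw [this]; ring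
      have hxu : ¬ (p : ℤ) ∣ (1 - (p : ℤ) * (u * (1 - a₀))) := by
        intro ⟨c, hc⟩
        have : (p : ℤ) ∣ 1 := ⟨c + u * (1 - a₀), by linarith⟩
        exact hpp.not_unit (isUnit_of_dvd_one this)
      obtain ⟨j, hj⟩ := aux_key (p : ℤ) hpp ℓ δ hδℓ.le
        (1 - (p : ℤ) * (u * (1 - a₀))) (1 - b₀ * k) hxu
      refine ⟨j, k, ?_⟩
      have hmain : ((p : ℤ) ^ δ * a₀) * j + ((p : ℤ) ^ δ * b₀) * k
            + ((p : ℤ) ^ δ * d') * j * k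
          = j * ((p : ℤ) ^ δ * (1 - (p : ℤ) * (u * (1 - a₀))))
            + ((p : ℤ) ^ δ - (p : ℤ) ^ δ * (1 - b₀ * k)) := by
        linear_combination j * hx
      rw [hmain]
      calc j * ((p : ℤ) ^ δ * (1 - (p : ℤ) * (u * (1 - a₀))))
            + ((p : ℤ) ^ δ - (p : ℤ) ^ δ * (1 - b₀ * k))
          ≡ (p : ℤ) ^ δ * (1 - b₀ * k)
            + ((p : ℤ) ^ δ - (p : ℤ) ^ δ * (1 - b₀ * k)) [ZMOD (p : ℤ) ^ ℓ] :=
            Int.ModEq.add_right _ hj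
        _ = (p : ℤ) ^ δ := by ring
    · -- p^δ ∤ b : take j = 0
      have hb0 : b ≠ 0 := by rintro rfl; exact hB (dvd_zero _)
      obtain ⟨m, u, hu, rfl⟩ := aux_val (p : ℤ) hpp b.natAbs b hb0 le_rfl
      have hmδ : m < δ := by
        by_contra hmδ
        exact hB (Dvd.dvd.mul_right (pow_dvd_pow _ (by omega)) u)
      obtain ⟨k, hk⟩ := aux_key (p : ℤ) hpp ℓ m (by omega) u ((p : ℤ) ^ (δ - m)) hu
      refine ⟨0, k, ?_⟩
      have h1 : a * 0 + ((p : ℤ) ^ m * u) * k + ((p : ℤ) ^ δ * d') * 0 * k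
          = k * ((p : ℤ) ^ m * u) := by ring
      have h2 : (p : ℤ) ^ m * (p : ℤ) ^ (δ - m) = (p : ℤ) ^ δ := by
        rw [← pow_add]; congr 1; omega
      rw [h1, ← h2]
      exact hk
  · -- p^δ ∤ a : take k = 0
    have ha0 : a ≠ 0 := by rintro rfl; exact hA (dvd_zero _)
    obtain ⟨m, u, hu, rfl⟩ := aux_val (p : ℤ) hpp a.natAbs a ha0 le_rfl
    have hmδ : m < δ := by
      by_contra hmδ
      exact hA (Dvd.dvd.mul_right (pow_dvd_pow _ (by omega)) u)
    obtain ⟨j, hj⟩ := aux_key (p : ℤ) hpp ℓ m (by omega) u ((p : ℤ) ^ (δ - m)) hu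
    refine ⟨j, 0, ?_⟩
    have h1 : ((p : ℤ) ^ m * u) * j + b * 0 + ((p : ℤ) ^ δ * d') * j * 0
        = j * ((p : ℤ) ^ m * u) := by ring
    have h2 : (p : ℤ) ^ m * (p : ℤ) ^ (δ - m) = (p : ℤ) ^ δ := by
      rw [← pow_add]; congr 1; omega
    rw [h1, ← h2]
    exact hj
end

section
/- The union over all S_d-orbits X of the images σ_X((Z/nZ)^d) is invariant under rotation by the angle 2π·gcd(n,d)/n, hence has n/gcd(n,d)-fold dihedral symmetry. -/
/-!
Shifting `x` and `y` by constant vectors `a` and `b` maps orbits to orbits and multiplies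
`σ_X(y)` by `e((a t + b s + a b d) / n)`, where `s` and `t` are the coordinate sums of `x` and `y`
(the former is constant on the orbit). So the rotation by `2π gcd(n, d) / n` follows once every
multiple of `d` in `ZMod n`, such as `gcd(n, d)`, has the form `a t + b s + a b d`. By the Chinese
remainder theorem it suffices to solve this in `ZMod (p ^ k)`, a quotient of `ℤ_[p]`, and in a
local ring with totally ordered divisibility the equation is solved by a case split on which of
`t`, `s`, `d` divides the others. Conjugation is the substitution `y ↦ -y`.
-/

open Finset

def ShiftEquationSolvable (R : Type*) [CommRing R] : Prop :=
  ∀ d s t c : R, ∃ a b : R, a * t + b * s + a * b * d = c * d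

namespace ShiftEquationSolvable

variable {R S : Type*} [CommRing R] [CommRing S]

theorem of_surjective (h : ShiftEquationSolvable R) (f : R →+* S) (hf : Function.Surjective f) :
    ShiftEquationSolvable S := by
  intro d s t c
  obtain ⟨d, rfl⟩ := hf d
  obtain ⟨s, rfl⟩ := hf s
  obtain ⟨t, rfl⟩ := hf t
  obtain ⟨c, rfl⟩ := hf c
  obtain ⟨a, b, hab⟩ := h d s t c
  exact ⟨f a, f b, by simpa only [map_add, map_mul] using congrArg f hab⟩

theorem prod (hR : ShiftEquationSolvable R) (hS : ShiftEquationSolvable S) :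
    ShiftEquationSolvable (R × S) := by
  intro d s t c
  obtain ⟨a₁, b₁, h₁⟩ := hR d.1 s.1 t.1 c.1
  obtain ⟨a₂, b₂, h₂⟩ := hS d.2 s.2 t.2 c.2
  exact ⟨(a₁, a₂), (b₁, b₂), Prod.ext h₁ h₂⟩

/-- If neither `t` nor `s` divides `d`, then `d` divides both, and `b = 1` works because
`t + d` is then an associate of `d`. -/
theorem of_isLocalRing [IsLocalRing R] [PreValuationRing R] : ShiftEquationSolvable R := by
  intro d s t c
  rcases ValuationRing.dvd_total t d with ⟨q, rfl⟩ | ⟨t', rfl⟩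
  · exact ⟨c * q, 0, by ring⟩
  rcases ValuationRing.dvd_total s d with ⟨q, rfl⟩ | ⟨s', rfl⟩
  · exact ⟨0, c * q, by ring⟩
  by_cases ht' : IsUnit t'
  · obtain ⟨u, rfl⟩ := ht'
    exact ⟨c * ↑u⁻¹, 0, by linear_combination c * d * u.inv_mul⟩
  obtain ⟨u, hu⟩ := IsLocalRing.isUnit_one_sub_self_of_mem_nonunits (-t')
    (mem_nonunits_iff.mpr (by rwa [IsUnit.neg_iff]))
  exact ⟨(c - s') * ↑u⁻¹, 1,
    by linear_combination (c - s') * d * u.inv_mul - (c - s') * ↑u⁻¹ * d * hu⟩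

end ShiftEquationSolvable

theorem shiftEquationSolvable_zmod {n : ℕ} (hn : n ≠ 0) : ShiftEquationSolvable (ZMod n) := by
  induction n using Nat.recOnPrimeCoprime with
  | zero => exact absurd rfl hn
  | prime_pow p k hp =>
    have : Fact p.Prime := ⟨hp⟩
    exact ShiftEquationSolvable.of_isLocalRing.of_surjective (PadicInt.toZModPow k)
      (ZMod.ringHom_surjective _)
  | coprime a b _ _ hab ha hb =>
    exact ((ha (left_ne_zero_of_mul hn)).prod (hb (right_ne_zero_of_mul hn))).of_surjective
      (ZMod.chineseRemainder hab).symm.toRingHom (ZMod.chineseRemainder hab).symm.surjective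

theorem exists_natCast_gcd_eq_mul (n d : ℕ) : ∃ c : ZMod n, (n.gcd d : ZMod n) = c * d :=
  ⟨Nat.gcdB n d, by
    have := congrArg (Int.cast : ℤ → ZMod n) (Nat.gcd_eq_gcd_ab n d)
    push_cast at this
    rw [this, ZMod.natCast_self, zero_mul, zero_add, mul_comm]⟩

theorem e_eq_stdAddChar (n : ℕ) [NeZero n] (z : ZMod n) : e n z = ZMod.stdAddChar z := by
  rw [ZMod.stdAddChar_apply, ZMod.toCircle_apply, e]

theorem e_natCast (n : ℕ) [NeZero n] (k : ℕ) :
    e n k = Complex.exp (2 * Real.pi * Complex.I * k / n) := by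
  rw [e_eq_stdAddChar, ZMod.stdAddChar_apply, ZMod.toCircle_natCast]

theorem dot_neg_right {n d : ℕ} (x y : Fin d → ZMod n) : dot x (-y) = -dot x y := by
  simp only [dot, Pi.neg_apply, mul_neg, sum_neg_distrib]

theorem dot_add_const {n d : ℕ} (x y : Fin d → ZMod n) (a b : ZMod n) :
    dot (x + fun _ => a) (y + fun _ => b) =
      dot x y + (a * ∑ i, y i + b * ∑ i, x i + a * b * (d : ZMod n)) := by
  simp only [dot, Pi.add_apply, add_mul, mul_add, sum_add_distrib, ← mul_sum, ← sum_mul,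
    sum_const, card_univ, Fintype.card_fin, nsmul_eq_mul]
  ring

theorem sum_eq_of_mem_orbit {n d : ℕ} {x v : Fin d → ZMod n} (h : v ∈ orbit n d x) :
    ∑ i, v i = ∑ i, x i := by
  obtain ⟨π, -, rfl⟩ := mem_image.mp h
  exact Equiv.sum_comp π x

theorem orbit_add_const (n d : ℕ) (x : Fin d → ZMod n) (a : ZMod n) :
    orbit n d (x + fun _ => a) = (orbit n d x).image (· + fun _ => a) := by
  rw [orbit, orbit, image_image]
  rfl

theorem σ_add_const (n d : ℕ) [NeZero n] (x y : Fin d → ZMod n) (a b : ZMod n) :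
    σ n d (x + fun _ => a) (y + fun _ => b) =
      e n (a * ∑ i, y i + b * ∑ i, x i + a * b * (d : ZMod n)) * σ n d x y := by
  rw [σ, σ, orbit_add_const, sum_image (fun _ _ _ _ => add_right_cancel), mul_sum]
  refine sum_congr rfl fun v hv => ?_
  simp only [dot_add_const, sum_eq_of_mem_orbit hv, e_eq_stdAddChar, AddChar.map_add_eq_mul,
    mul_comm]

theorem σ_neg_right (n d : ℕ) [NeZero n] (x y : Fin d → ZMod n) :
    σ n d x (-y) = starRingEnd ℂ (σ n d x y) := by
  simp only [σ, map_sum, dot_neg_right, e_eq_stdAddChar, AddChar.map_neg_eq_conj]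

theorem stmt_10_general (n d : ℕ) (hn : 0 < n) :
    (∀ (x y : Fin d → ZMod n), ∃ x' y' : Fin d → ZMod n,
        σ n d x' y' =
          Complex.exp (2 * Real.pi * Complex.I * (Nat.gcd n d) / n) * σ n d x y) ∧
      (∀ (x y : Fin d → ZMod n), ∃ x' y' : Fin d → ZMod n,
        σ n d x' y' = (starRingEnd ℂ) (σ n d x y)) := by
  have : NeZero n := ⟨hn.ne'⟩
  refine ⟨fun x y => ?_, fun x y => ⟨x, -y, σ_neg_right n d x y⟩⟩
  obtain ⟨c, hc⟩ := exists_natCast_gcd_eq_mul n d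
  obtain ⟨a, b, hab⟩ := shiftEquationSolvable_zmod hn.ne' d (∑ i, x i) (∑ i, y i) c
  refine ⟨x + fun _ => a, y + fun _ => b, ?_⟩
  rw [σ_add_const, hab, ← hc, e_natCast]

theorem stmt_10 (n d : ℕ) (hn : 0 < n) (hd : 0 < d) :
    (∀ (x y : Fin d → ZMod n), ∃ x' y' : Fin d → ZMod n,
        σ n d x' y' =
          Complex.exp (2 * Real.pi * Complex.I * (Nat.gcd n d) / n) * σ n d x y) ∧
      (∀ (x y : Fin d → ZMod n), ∃ x' y' : Fin d → ZMod n,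
        σ n d x' y' = (starRingEnd ℂ) (σ n d x y)) :=
  stmt_10_general n d hn
end
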